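/- For any integers N ≥ d+1 ≥ 2, let Z be an N×d real matrix, let Z̄ = (I_N − (1/N)·1_{N,N}) Z, and let T be the unique positive semidefinite symmetric square root of (1/N) Z̄ᵀ Z̄. Then the map Z ↦ T is Lipschitz with constant √2/√N with respect to the Frobenius norm. -/

import Mathlib

open Matrix Real

/-- The absolute value |A| = (AᵀA)^{1/2} of a real rectangular matrix: the unique
positive semidefinite symmetric square root of AᵀA. -/
noncomputable def matAbs {m n : ℕ} (A : Matrix (Fin m) (Fin n) ℝ) : Matrix (Fin n) (Fin n) ℝ :=
  ((Matrix.posSemidef_conjTranspose_mul_self A).1.eigenvectorUnitary : Matrix (Fin n) (Fin n) ℝ) *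
    diagonal ((RCLike.ofReal : ℝ → ℝ) ∘ Real.sqrt ∘
      (Matrix.posSemidef_conjTranspose_mul_self A).1.eigenvalues) *
    star ((Matrix.posSemidef_conjTranspose_mul_self A).1.eigenvectorUnitary : Matrix (Fin n) (Fin n) ℝ)

/-- The Frobenius norm of a real matrix. -/
noncomputable def frob {m n : ℕ} (A : Matrix (Fin m) (Fin n) ℝ) : ℝ :=
  Real.sqrt (∑ i, ∑ j, (A i j) ^ 2)

/-- The centering projection Z ↦ Z̄ = (I - (1/N)·𝟙)Z. -/
noncomputable def centered {N d : ℕ} (Z : Matrix (Fin N) (Fin d) ℝ) : Matrix (Fin N) (Fin d) ℝ :=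
  (1 - (N : ℝ)⁻¹ • Matrix.of fun _ _ => (1 : ℝ)) * Z

/-- T(Z): the unique positive semidefinite symmetric square root of (1/N)·Z̄ᵀZ̄,
realized as |N^{-1/2} • Z̄|. -/
noncomputable def covSqrt {N d : ℕ} (Z : Matrix (Fin N) (Fin d) ℝ) : Matrix (Fin d) (Fin d) ℝ :=
  matAbs ((Real.sqrt N)⁻¹ • centered Z)

/-!
For Hermitian `S` we have `|S| = S⁺ + S⁻` and `S = S⁺ - S⁻` with `S⁺ S⁻ = 0`; expanding the squares,
`‖|S| - |T|‖² - ‖S - T‖² = -4 tr(S⁺ T⁻ + T⁺ S⁻) ≤ 0`. The absolute value of the Hermitian dilation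
`[[0, Aᴴ], [A, 0]]` is `diag(|A|, |Aᴴ|)`, so the Hermitian case applied to dilations gives the
Araki–Yamagami bound `‖|A| - |B|‖ ≤ √2 ‖A - B‖`. Centering is an orthogonal projection, hence a
Frobenius contraction, and applying the bound to `A = N^{-1/2} Z̄` only rescales `‖A - B‖`.
-/

open scoped MatrixOrder

namespace Matrix

section Hermitian
variable {n : Type*} [Fintype n] [DecidableEq n]

lemma PosSemidef.trace_mul_nonneg {P Q : Matrix n n ℝ} (hP : P.PosSemidef)
    (hQ : Q.PosSemidef) : 0 ≤ trace (P * Q) := by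
  obtain ⟨B, rfl⟩ := CStarAlgebra.nonneg_iff_eq_star_mul_self.mp hP.nonneg
  rw [mul_assoc, trace_mul_comm, star_eq_conjTranspose]
  exact (hQ.mul_mul_conjTranspose_same B).trace_nonneg

lemma trace_add_sub_sq_le_of_mul_eq_zero {P Q P' Q' : Matrix n n ℝ} (hP : P.PosSemidef)
    (hQ : Q.PosSemidef) (hP' : P'.PosSemidef) (hQ' : Q'.PosSemidef) (hPQ : P * Q = 0)
    (hPQ' : P' * Q' = 0) :
    trace ((P + Q - (P' + Q'))ᴴ * (P + Q - (P' + Q'))) ≤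
      trace ((P - Q - (P' - Q'))ᴴ * (P - Q - (P' - Q'))) := by
  have hsq : (P + Q - (P' + Q')) * (P + Q - (P' + Q')) =
      (P - Q - (P' - Q')) * (P - Q - (P' - Q')) + (2 : ℝ) • (P * Q + Q * P + P' * Q' + Q' * P')
        - (2 : ℝ) • (P * Q' + Q' * P + P' * Q + Q * P') := by
    simp only [smul_add, two_smul]
    noncomm_ring
  simp only [conjTranspose_add, conjTranspose_sub, hP.1.eq, hQ.1.eq, hP'.1.eq, hQ'.1.eq]
  rw [hsq, trace_sub, trace_add, trace_smul, trace_smul]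
  simp only [trace_add, trace_mul_comm Q P, trace_mul_comm Q' P', trace_mul_comm Q' P,
    trace_mul_comm Q P', hPQ, hPQ', trace_zero, smul_eq_mul]
  linarith [hP.trace_mul_nonneg hQ', hP'.trace_mul_nonneg hQ]

lemma IsHermitian.trace_abs_sub_sq_le {S T : Matrix n n ℝ} (hS : S.IsHermitian)
    (hT : T.IsHermitian) :
    trace ((CFC.abs S - CFC.abs T)ᴴ * (CFC.abs S - CFC.abs T)) ≤ trace ((S - T)ᴴ * (S - T)) := by
  have hS' : IsSelfAdjoint S := hS
  have hT' : IsSelfAdjoint T := hT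
  rw [← CFC.posPart_add_negPart S, ← CFC.posPart_add_negPart T]
  conv_rhs => rw [← CFC.posPart_sub_negPart S, ← CFC.posPart_sub_negPart T]
  exact trace_add_sub_sq_le_of_mul_eq_zero (CFC.posPart_nonneg S).posSemidef
    (CFC.negPart_nonneg S).posSemidef (CFC.posPart_nonneg T).posSemidef
    (CFC.negPart_nonneg T).posSemidef (CFC.posPart_mul_negPart S) (CFC.posPart_mul_negPart T)

end Hermitian

lemma fromBlocks_sub {l m n o α : Type*} [AddGroup α] (A A' : Matrix n l α) (B B' : Matrix n m α)
    (C C' : Matrix o l α) (D D' : Matrix o m α) :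
    fromBlocks A B C D - fromBlocks A' B' C' D' =
      fromBlocks (A - A') (B - B') (C - C') (D - D') := by
  simp [sub_eq_add_neg, fromBlocks_neg, fromBlocks_add]

lemma trace_fromBlocks {m n α : Type*} [Fintype m] [Fintype n] [AddCommMonoid α] (A : Matrix n n α)
    (B : Matrix n m α) (C : Matrix m n α) (D : Matrix m m α) :
    trace (fromBlocks A B C D) = trace A + trace D := by
  simp [trace, Fintype.sum_sum_type]

def hermitianDilation {m n : Type*} (A : Matrix m n ℝ) : Matrix (n ⊕ m) (n ⊕ m) ℝ :=
  fromBlocks 0 Aᴴ A 0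

lemma isHermitian_hermitianDilation {m n : Type*} (A : Matrix m n ℝ) :
    (hermitianDilation A).IsHermitian := by
  simp [IsHermitian, hermitianDilation, fromBlocks_transpose]

section Dilation
variable {m n : Type*} [Fintype m] [Fintype n] [DecidableEq m] [DecidableEq n]

lemma PosSemidef.fromBlocks_zero {A : Matrix n n ℝ} {D : Matrix m m ℝ} (hA : A.PosSemidef)
    (hD : D.PosSemidef) : (fromBlocks A 0 0 D).PosSemidef := by
  obtain ⟨B, rfl⟩ := CStarAlgebra.nonneg_iff_eq_star_mul_self.mp hA.nonneg
  obtain ⟨C, rfl⟩ := CStarAlgebra.nonneg_iff_eq_star_mul_self.mp hD.nonneg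
  simpa [star_eq_conjTranspose, fromBlocks_transpose, fromBlocks_multiply] using
    posSemidef_conjTranspose_mul_self (fromBlocks B 0 0 C)

lemma abs_hermitianDilation (A : Matrix m n ℝ) :
    CFC.abs (hermitianDilation A) = fromBlocks (CFC.sqrt (Aᴴ * A)) 0 0 (CFC.sqrt (A * Aᴴ)) := by
  have h₁ := (posSemidef_conjTranspose_mul_self A).nonneg
  have h₂ := (posSemidef_self_mul_conjTranspose A).nonneg
  refine CFC.sqrt_unique ?_
    ((CFC.sqrt_nonneg _).posSemidef.fromBlocks_zero (CFC.sqrt_nonneg _).posSemidef).nonneg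
  rw [fromBlocks_multiply, CFC.sqrt_mul_sqrt_self _ h₁, CFC.sqrt_mul_sqrt_self _ h₂,
    (isHermitian_hermitianDilation A).star_eq, hermitianDilation, fromBlocks_multiply]
  simp

lemma trace_sqrt_sub_sq_le (A B : Matrix m n ℝ) :
    trace ((CFC.sqrt (Aᴴ * A) - CFC.sqrt (Bᴴ * B))ᴴ * (CFC.sqrt (Aᴴ * A) - CFC.sqrt (Bᴴ * B))) ≤
      2 * trace ((A - B)ᴴ * (A - B)) := by
  have h := (isHermitian_hermitianDilation A).trace_abs_sub_sq_le (isHermitian_hermitianDilation B)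
  rw [abs_hermitianDilation, abs_hermitianDilation] at h
  simp only [hermitianDilation, fromBlocks_sub, fromBlocks_conjTranspose, fromBlocks_multiply,
    trace_fromBlocks, conjTranspose_zero, Matrix.mul_zero, add_zero, zero_add, sub_zero] at h
  rw [← conjTranspose_sub, conjTranspose_conjTranspose, trace_mul_comm (A - B)] at h
  linarith
    [(posSemidef_conjTranspose_mul_self (CFC.sqrt (A * Aᴴ) - CFC.sqrt (B * Bᴴ))).trace_nonneg]

end Dilation

section Projection
variable {m n : Type*} [Fintype m] [Fintype n] [DecidableEq m]

lemma IsStarProjection.trace_conjTranspose_mul_self_mul_le {P : Matrix m m ℝ}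
    (hP : IsStarProjection P) (Y : Matrix m n ℝ) :
    trace ((P * Y)ᴴ * (P * Y)) ≤ trace (Yᴴ * Y) := by
  have hsq {Q : Matrix m m ℝ} (hQ : IsStarProjection Q) : (Q * Y)ᴴ * (Q * Y) = Yᴴ * Q * Y := by
    rw [conjTranspose_mul, ← star_eq_conjTranspose Q, hQ.isSelfAdjoint.star_eq, Matrix.mul_assoc,
      ← Matrix.mul_assoc Q, hQ.isIdempotentElem.eq, Matrix.mul_assoc]
  have hsplit : Yᴴ * Y = (P * Y)ᴴ * (P * Y) + ((1 - P) * Y)ᴴ * ((1 - P) * Y) := by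
    rw [hsq hP, hsq hP.one_sub, Matrix.mul_sub, Matrix.sub_mul, Matrix.mul_one]
    abel
  rw [hsplit, trace_add]
  linarith [(posSemidef_conjTranspose_mul_self ((1 - P) * Y)).trace_nonneg]

lemma isStarProjection_inv_card_smul_of_one :
    IsStarProjection ((Fintype.card m : ℝ)⁻¹ • of fun _ _ => (1 : ℝ) : Matrix m m ℝ) := by
  refine ⟨?_, ?_⟩
  · have hJ : (of fun _ _ => (1 : ℝ) : Matrix m m ℝ) * of (fun _ _ => 1) =
        (Fintype.card m : ℝ) • of fun _ _ => 1 := by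
      ext; simp [mul_apply]
    rw [IsIdempotentElem, smul_mul_smul, hJ, smul_smul]
    congr 1
    simpa using mul_self_mul_inv (Fintype.card m : ℝ)⁻¹
  · ext; simp

end Projection

end Matrix

open Matrix

lemma frob_eq_sqrt_trace {m n : ℕ} (A : Matrix (Fin m) (Fin n) ℝ) :
    frob A = √(trace (Aᴴ * A)) := by
  rw [frob, trace, Finset.sum_comm]
  simp [mul_apply, sq]

lemma frob_smul {m n : ℕ} (c : ℝ) (A : Matrix (Fin m) (Fin n) ℝ) : frob (c • A) = |c| * frob A := by
  simp only [frob, Matrix.smul_apply, smul_eq_mul, mul_pow, ← Finset.mul_sum]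
  rw [Real.sqrt_mul (sq_nonneg c), Real.sqrt_sq_eq_abs]

lemma matAbs_eq_sqrt {m n : ℕ} (A : Matrix (Fin m) (Fin n) ℝ) : matAbs A = CFC.sqrt (Aᴴ * A) := by
  have hA := posSemidef_conjTranspose_mul_self A
  rw [CFC.sqrt_eq_real_sqrt _ hA.nonneg, cfcₙ_eq_cfc, hA.1.cfc_eq, IsHermitian.cfc,
    Unitary.conjStarAlgAut_apply]
  rfl

lemma frob_matAbs_sub_le {m n : ℕ} (A B : Matrix (Fin m) (Fin n) ℝ) :
    frob (matAbs A - matAbs B) ≤ √2 * frob (A - B) := by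
  rw [matAbs_eq_sqrt, matAbs_eq_sqrt, frob_eq_sqrt_trace, frob_eq_sqrt_trace,
    ← Real.sqrt_mul zero_le_two]
  exact Real.sqrt_le_sqrt (trace_sqrt_sub_sq_le A B)

lemma frob_centered_le {N d : ℕ} (Z : Matrix (Fin N) (Fin d) ℝ) : frob (centered Z) ≤ frob Z := by
  have hP : IsStarProjection
      (1 - (N : ℝ)⁻¹ • of fun _ _ => (1 : ℝ) : Matrix (Fin N) (Fin N) ℝ) := by
    simpa using (isStarProjection_inv_card_smul_of_one (m := Fin N)).one_sub
  rw [centered, frob_eq_sqrt_trace, frob_eq_sqrt_trace]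
  exact Real.sqrt_le_sqrt (hP.trace_conjTranspose_mul_self_mul_le Z)

theorem stmt15_general (N d : ℕ) (Z Z' : Matrix (Fin N) (Fin d) ℝ) :
    frob (covSqrt Z - covSqrt Z') ≤ (Real.sqrt 2 / Real.sqrt N) * frob (Z - Z') := by
  have hsub : centered Z - centered Z' = centered (Z - Z') := (Matrix.mul_sub _ _ _).symm
  calc frob (covSqrt Z - covSqrt Z')
      ≤ √2 * frob ((√N)⁻¹ • centered Z - (√N)⁻¹ • centered Z') := frob_matAbs_sub_le _ _
    _ = √2 / √N * frob (centered (Z - Z')) := by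
      rw [← smul_sub, hsub, frob_smul, abs_inv, abs_of_nonneg (Real.sqrt_nonneg _)]
      ring
    _ ≤ √2 / √N * frob (Z - Z') := by
      gcongr
      exact frob_centered_le _

theorem stmt15 (N d : ℕ) (hd : 1 ≤ d) (hN : d + 1 ≤ N)
    (Z Z' : Matrix (Fin N) (Fin d) ℝ) :
    frob (covSqrt Z - covSqrt Z') ≤ (Real.sqrt 2 / Real.sqrt N) * frob (Z - Z') :=
  stmt15_general N d Z Z'
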